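/- Let X be a real inner product space, x, y ∈ X and 0 < m < M. If ⟨M•y − x, x − m•y⟩ ≥ 0, then 0 ≤ ‖x‖²·‖y‖² − ⟨x,y⟩² ≤ (1/4)·((M − m)²/(M·m))·⟨x,y⟩². -/

import Mathlib

/-!
Expanding the hypothesis gives `‖x‖² + M m ‖y‖² ≤ (M + m) ⟪x, y⟫`. By AM-GM the left side is at least
`2 √(M m) ‖x‖ ‖y‖`, so `4 M m ‖x‖² ‖y‖² ≤ (M + m)² ⟪x, y⟫²`, which is the upper bound since
`(M + m)² - 4 M m = (M - m)²`. The lower bound is Cauchy–Schwarz.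
-/

open scoped RealInnerProductSpace

theorem real_inner_smul_sub_sub_smul {X : Type*} [NormedAddCommGroup X] [InnerProductSpace ℝ X]
    (x y : X) (m M : ℝ) :
    ⟪M • y - x, x - m • y⟫ = (M + m) * ⟪x, y⟫ - ‖x‖ ^ 2 - M * m * ‖y‖ ^ 2 := by
  simp only [inner_sub_left, inner_sub_right, real_inner_smul_left, real_inner_smul_right,
    real_inner_self_eq_norm_sq, real_inner_comm x y]
  ring

theorem four_mul_mul_mul_le_sq_of_add_le {p q c t : ℝ} (h₀ : 0 ≤ p + c * q)
    (h : p + c * q ≤ t) : 4 * c * p * q ≤ t ^ 2 := by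
  nlinarith [sq_nonneg (p - c * q), mul_le_mul h h h₀ (h₀.trans h)]

theorem sub_le_of_four_mul_mul_le {m M P A : ℝ} (hMm : 0 < M * m)
    (h : 4 * (M * m) * P ≤ (M + m) ^ 2 * A) :
    P - A ≤ 1 / 4 * ((M - m) ^ 2 / (M * m)) * A := by
  rw [show 1 / 4 * ((M - m) ^ 2 / (M * m)) * A = (M - m) ^ 2 * A / (4 * (M * m)) by ring,
    le_div_iff₀ (by positivity)]
  linarith

theorem reverse_cbs_real_squared {X : Type*} [NormedAddCommGroup X]
    [InnerProductSpace ℝ X] (x y : X) (m M : ℝ) (hm : 0 < m) (hmM : m < M)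
    (h : 0 ≤ ⟪M • y - x, x - m • y⟫) :
    0 ≤ ‖x‖ ^ 2 * ‖y‖ ^ 2 - ⟪x, y⟫ ^ 2 ∧
      ‖x‖ ^ 2 * ‖y‖ ^ 2 - ⟪x, y⟫ ^ 2 ≤
        (1 / 4) * ((M - m) ^ 2 / (M * m)) * ⟪x, y⟫ ^ 2 := by
  have hMm : 0 < M * m := mul_pos (hm.trans hmM) hm
  have hkey : ‖x‖ ^ 2 + M * m * ‖y‖ ^ 2 ≤ (M + m) * ⟪x, y⟫ := by
    rw [real_inner_smul_sub_sub_smul] at h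
    linarith
  have hamgm : 4 * (M * m) * (‖x‖ ^ 2 * ‖y‖ ^ 2) ≤ (M + m) ^ 2 * ⟪x, y⟫ ^ 2 := by
    have := four_mul_mul_mul_le_sq_of_add_le (by positivity) hkey
    linarith
  refine ⟨?_, sub_le_of_four_mul_mul_le hMm hamgm⟩
  rw [sub_nonneg, ← mul_pow, ← sq_abs ⟪x, y⟫]
  exact pow_le_pow_left₀ (abs_nonneg _) (abs_real_inner_le_norm x y) 2
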